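/- Let τ be a σ-maxitive measure on a measurable space (E, 𝔅). Then τ satisfies the Radon–Nikodym property with respect to the Shilkret integral if and only if τ is σ-finite and σ-principal. -/

import Mathlib

open scoped ENNReal
open Set

/-- A σ-maxitive measure: vanishes on `∅` and turns countable unions of
measurable sets into suprema. -/
def SigmaMaxitive {E : Type*} [MeasurableSpace E] (ν : Set E → ℝ≥0∞) : Prop :=
  ν ∅ = 0 ∧ ∀ B : ℕ → Set E, (∀ n, MeasurableSet (B n)) →
    ν (⋃ n, B n) = ⨆ n, ν (B n)

/-- A σ-ideal of the σ-algebra: a nonempty collection of measurable sets closed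
under countable unions and under measurable subsets. -/
def IsSigmaIdeal {E : Type*} [MeasurableSpace E] (I : Set (Set E)) : Prop :=
  I.Nonempty ∧ (∀ A ∈ I, MeasurableSet A) ∧
    (∀ B : ℕ → Set E, (∀ n, B n ∈ I) → (⋃ n, B n) ∈ I) ∧
    (∀ A B : Set E, B ∈ I → A ⊆ B → MeasurableSet A → A ∈ I)

/-- `τ` is σ-principal. -/
def SigmaPrincipal {E : Type*} [MeasurableSpace E] (τ : Set E → ℝ≥0∞) : Prop :=
  ∀ I : Set (Set E), IsSigmaIdeal I → ∃ L ∈ I, ∀ S ∈ I, τ (S \ L) = 0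

/-- The Shilkret integral `⨆_{t ∈ (0,∞)} t * ν(B ∩ {f > t})`. -/
noncomputable def shilkretInt {E : Type*} [MeasurableSpace E] (ν : Set E → ℝ≥0∞)
    (f : E → ℝ≥0∞) (B : Set E) : ℝ≥0∞ :=
  ⨆ t ∈ Ioo (0 : ℝ≥0∞) ⊤, t * ν (B ∩ {x | t < f x})


/-!
For the forward direction, apply the Radon–Nikodym property to the `{0, 1}`-valued σ-maxitive
measure `B ↦ 1_{B ∉ I}` of a σ-ideal `I` containing the `τ`-null sets. Its density `c` satisfies
`{c = 0} ∈ I`, `τ(S ∩ {c > 0}) = 0` for `S ∈ I`, and `τ{c > t} < ∞` for `t > 0`. Taking for `I`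
the sets covered by countably many sets of finite measure gives `E = {c = 0} ∪ ⋃ₙ {c > 1/(n+1)}`
in `I`, i.e. σ-finiteness; taking the sets `τ`-almost contained in a member of a given σ-ideal,
a member `L` almost containing `{c = 0}` is the principal element.

Conversely, for rational `q` the sets on which `ν` is hereditarily dominated by `q τ` form a
σ-ideal with an essentially largest member `L_q`, and `c x = inf {q | x ∈ L_q}` is a density.
The inequality `ν ≤ ∫⁻⊕ c dτ` holds piecewise by construction (σ-finiteness kills `{c = 0}`,
absolute continuity `{c = ∞}`). The reverse one reduces to `q τ(A) ≤ ν(A)` when `A` misses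
`L_q`; for this take a principal member `W` of the σ-ideal `{S | q τ(S ∩ A) ≤ ν(A)}`: every
part of `A \ W` on which `ν` exceeds `q τ` lies in that ideal, hence is null, so `A \ W` is
dominated and thus `τ`-null.
-/

section Shilkret

open Filter Topology

variable {E : Type*} [MeasurableSpace E] {τ ν : Set E → ℝ≥0∞}

theorem ENNReal.eq_zero_of_forall_pos_le_mul {x y : ℝ≥0∞} (hy : y ≠ ⊤)
    (h : ∀ ε : ℝ≥0∞, 0 < ε → x ≤ ε * y) : x = 0 := by
  have hlim : Tendsto (fun n : ℕ => (n : ℝ≥0∞)⁻¹ * y) atTop (𝓝 0) := by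
    simpa using ENNReal.Tendsto.mul_const ENNReal.tendsto_inv_nat_nhds_zero (Or.inr hy)
  exact nonpos_iff_eq_zero.1 <|
    ge_of_tendsto' hlim fun n => h _ (ENNReal.inv_pos.2 (ENNReal.natCast_ne_top n))

theorem ENNReal.exists_ofReal_rat_btwn {a b : ℝ≥0∞} (h : a < b) :
    ∃ q : ℚ, a < ENNReal.ofReal q ∧ ENNReal.ofReal q < b := by
  obtain ⟨q, -, haq, hqb⟩ := ENNReal.lt_iff_exists_rat_btwn.1 h
  exact ⟨q, haq, hqb⟩

theorem setOf_pos_eq_iUnion_inv_lt {α : Type*} (f : α → ℝ≥0∞) :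
    {x | 0 < f x} = ⋃ n : ℕ, {x | ((n : ℝ≥0∞) + 1)⁻¹ < f x} := by
  ext x
  simp only [mem_ofPred_eq, mem_iUnion]
  refine ⟨fun hx => ?_, fun ⟨n, hn⟩ => lt_of_le_of_lt zero_le hn⟩
  obtain ⟨n, hn⟩ := ENNReal.exists_inv_nat_lt hx.ne'
  exact ⟨n, lt_of_le_of_lt (ENNReal.inv_le_inv.2 le_self_add) hn⟩

theorem SigmaMaxitive.iUnion (hτ : SigmaMaxitive τ) {ι : Type*} [Countable ι] {B : ι → Set E}
    (hB : ∀ i, MeasurableSet (B i)) : τ (⋃ i, B i) = ⨆ i, τ (B i) := by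
  cases isEmpty_or_nonempty ι
  · simp [hτ.1]
  · obtain ⟨g, hg⟩ := exists_surjective_nat ι
    rw [← hg.iUnion_comp, ← hg.iSup_comp]
    exact hτ.2 _ fun n => hB (g n)

theorem SigmaMaxitive.union (hτ : SigmaMaxitive τ) {A B : Set E} (hA : MeasurableSet A)
    (hB : MeasurableSet B) : τ (A ∪ B) = τ A ⊔ τ B := by
  rw [union_eq_iUnion, hτ.iUnion (Bool.forall_bool.2 ⟨hB, hA⟩), iSup_bool_eq]
  rfl

theorem SigmaMaxitive.mono (hτ : SigmaMaxitive τ) {A B : Set E} (hA : MeasurableSet A)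
    (hB : MeasurableSet B) (hAB : A ⊆ B) : τ A ≤ τ B := by
  rw [← union_eq_right.2 hAB, hτ.union hA hB]
  exact le_sup_left

theorem IsSigmaIdeal.empty_mem {I : Set (Set E)} (hI : IsSigmaIdeal I) : ∅ ∈ I := by
  obtain ⟨A, hA⟩ := hI.1
  exact hI.2.2.2 ∅ A hA (empty_subset A) MeasurableSet.empty

theorem IsSigmaIdeal.iUnion_mem {I : Set (Set E)} (hI : IsSigmaIdeal I) {ι : Type*} [Countable ι]
    {B : ι → Set E} (hB : ∀ i, B i ∈ I) : (⋃ i, B i) ∈ I := by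
  cases isEmpty_or_nonempty ι
  · simpa using hI.empty_mem
  · obtain ⟨g, hg⟩ := exists_surjective_nat ι
    rw [← hg.iUnion_comp]
    exact hI.2.2.1 _ fun n => hB (g n)

theorem IsSigmaIdeal.union_mem {I : Set (Set E)} (hI : IsSigmaIdeal I) {A B : Set E} (hA : A ∈ I)
    (hB : B ∈ I) : A ∪ B ∈ I := by
  rw [union_eq_iUnion]
  exact hI.iUnion_mem (Bool.forall_bool.2 ⟨hB, hA⟩)

theorem sigmaMaxitive_indicator_compl {I : Set (Set E)} (hI : IsSigmaIdeal I) :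
    SigmaMaxitive (Iᶜ.indicator 1) := by
  refine ⟨indicator_of_notMem (notMem_compl_iff.2 hI.empty_mem) _, fun B hB => ?_⟩
  by_cases hall : ∀ n, B n ∈ I
  · simp [indicator_of_notMem, hall, hI.2.2.1 B hall]
  obtain ⟨k, hk⟩ := not_forall.1 hall
  have hU : (⋃ n, B n) ∉ I := fun h => hk (hI.2.2.2 _ _ h (subset_iUnion B k) (hB k))
  rw [indicator_of_mem (mem_compl hU)]
  refine le_antisymm (le_iSup_of_le k ?_) (iSup_le fun n => indicator_le_self _ _ _)
  rw [indicator_of_mem (mem_compl hk)]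
  rfl

theorem indicator_compl_one_eq_zero_iff {α : Type*} {I : Set α} {B : α} :
    Iᶜ.indicator (1 : α → ℝ≥0∞) B = 0 ↔ B ∈ I := by
  simp [indicator_apply_eq_zero]

def ShilkretAbsCont (ν τ : Set E → ℝ≥0∞) : Prop :=
  ∀ B : Set E, MeasurableSet B → τ B < ⊤ → ν B ≤ ⊤ * τ B

def HasShilkretRNP (τ : Set E → ℝ≥0∞) : Prop :=
  ∀ ν : Set E → ℝ≥0∞, SigmaMaxitive ν → ShilkretAbsCont ν τ →
    ∃ c : E → ℝ≥0∞, Measurable c ∧ ∀ B : Set E, MeasurableSet B → ν B = shilkretInt τ c B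

def IsSigmaFinite (τ : Set E → ℝ≥0∞) : Prop :=
  ∃ B : ℕ → Set E, (∀ n, MeasurableSet (B n)) ∧ (⋃ n, B n) = univ ∧ ∀ n, τ (B n) < ⊤

theorem shilkretAbsCont_indicator_compl {I : Set (Set E)}
    (hnull : ∀ B, MeasurableSet B → τ B = 0 → B ∈ I) : ShilkretAbsCont (Iᶜ.indicator 1) τ := by
  intro B hB _
  rcases eq_or_ne (τ B) 0 with h0 | h0
  · simp [indicator_of_notMem, hnull B hB h0]
  · simp [ENNReal.top_mul h0]

theorem mul_measure_inter_lt_le_shilkretInt (hτ : SigmaMaxitive τ) (c : E → ℝ≥0∞) (B : Set E)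
    (t : ℝ≥0∞) : t * τ (B ∩ {x | t < c x}) ≤ shilkretInt τ c B := by
  rcases eq_or_ne t 0 with rfl | ht0
  · simp
  rcases eq_or_ne t ⊤ with rfl | httop
  · simp [hτ.1]
  exact le_iSup₂ (f := fun t (_ : t ∈ Ioo (0 : ℝ≥0∞) ⊤) => t * τ (B ∩ {x | t < c x})) t
    ⟨pos_iff_ne_zero.2 ht0, lt_top_iff_ne_top.2 httop⟩

theorem shilkretInt_eq_zero_iff (hτ : SigmaMaxitive τ) {c : E → ℝ≥0∞} (hc : Measurable c)
    {B : Set E} (hB : MeasurableSet B) :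
    shilkretInt τ c B = 0 ↔ τ (B ∩ {x | 0 < c x}) = 0 := by
  have hlev (t : ℝ≥0∞) : MeasurableSet (B ∩ {x | t < c x}) := hB.inter (hc measurableSet_Ioi)
  constructor
  · intro h
    rw [setOf_pos_eq_iUnion_inv_lt, inter_iUnion, hτ.iUnion fun n => hlev _,
      ENNReal.iSup_eq_zero]
    intro n
    simpa using (mul_measure_inter_lt_le_shilkretInt hτ c B ((n : ℝ≥0∞) + 1)⁻¹).trans h.le
  · intro h
    refine nonpos_iff_eq_zero.1 (iSup₂_le fun t ht => ?_)
    calc t * τ (B ∩ {x | t < c x}) ≤ t * τ (B ∩ {x | 0 < c x}) :=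
          mul_le_mul_right (hτ.mono (hlev t) (hlev 0)
            (inter_subset_inter_right _ fun x hx => ht.1.trans hx)) t
      _ = 0 := by rw [h, mul_zero]

theorem shilkretInt_eq_top (hτ : SigmaMaxitive τ) {c : E → ℝ≥0∞} (hc : Measurable c) {B : Set E}
    (hB : MeasurableSet B) (h : τ (B ∩ {x | c x = ⊤}) ≠ 0) : shilkretInt τ c B = ⊤ := by
  refine top_unique ?_
  calc (⊤ : ℝ≥0∞) = (⨆ n : ℕ, (n : ℝ≥0∞)) * τ (B ∩ {x | c x = ⊤}) := by
        rw [ENNReal.iSup_natCast, ENNReal.top_mul h]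
    _ = ⨆ n : ℕ, (n : ℝ≥0∞) * τ (B ∩ {x | c x = ⊤}) := ENNReal.iSup_mul _ _
    _ ≤ shilkretInt τ c B := iSup_le fun n =>
        (mul_le_mul_right (hτ.mono (hB.inter (hc (measurableSet_singleton ⊤)))
          (hB.inter (hc measurableSet_Ioi)) fun x ⟨hxB, hx⟩ =>
            ⟨hxB, show (n : ℝ≥0∞) < c x from hx ▸ ENNReal.natCast_lt_top n⟩) _).trans
          (mul_measure_inter_lt_le_shilkretInt hτ c B n)

theorem measure_inter_eq_top_le_shilkretInt (hτ : SigmaMaxitive τ)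
    (hnull : ∀ B, MeasurableSet B → τ B = 0 → ν B = 0) {c : E → ℝ≥0∞} (hc : Measurable c)
    {B : Set E} (hB : MeasurableSet B) : ν (B ∩ {x | c x = ⊤}) ≤ shilkretInt τ c B := by
  rcases eq_or_ne (τ (B ∩ {x | c x = ⊤})) 0 with h0 | h0
  · rw [hnull (B ∩ {x | c x = ⊤}) (hB.inter (hc (measurableSet_singleton ⊤))) h0]
    exact zero_le
  · rw [shilkretInt_eq_top hτ hc hB h0]
    exact le_top


def sigmaFiniteSets (τ : Set E → ℝ≥0∞) : Set (Set E) :=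
  {B | MeasurableSet B ∧
    ∃ C : ℕ → Set E, (∀ n, MeasurableSet (C n)) ∧ B ⊆ ⋃ n, C n ∧ ∀ n, τ (C n) < ⊤}

theorem isSigmaIdeal_sigmaFiniteSets (hτ : SigmaMaxitive τ) : IsSigmaIdeal (sigmaFiniteSets τ) := by
  refine ⟨⟨∅, .empty, fun _ => ∅, fun _ => .empty, empty_subset _, fun _ => by simp [hτ.1]⟩,
    fun _ hB => hB.1, fun B hB => ?_, fun A B hB hAB hA => ?_⟩
  · choose hBm C hCm hBC hCfin using hB
    refine ⟨.iUnion hBm, fun k => C k.unpair.1 k.unpair.2, fun k => hCm _ _,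
      iUnion_subset fun n => (hBC n).trans (iUnion_subset fun m => ?_), fun k => hCfin _ _⟩
    exact subset_iUnion_of_subset (Nat.pair n m) (by simp)
  · obtain ⟨-, C, hCm, hBC, hCfin⟩ := hB
    exact ⟨hA, C, hCm, hAB.trans hBC, hCfin⟩

theorem mem_sigmaFiniteSets_of_lt_top {B : Set E} (hB : MeasurableSet B) (h : τ B < ⊤) :
    B ∈ sigmaFiniteSets τ :=
  ⟨hB, fun _ => B, fun _ => hB, subset_iUnion (fun _ => B) 0, fun _ => h⟩

def nullClosure (τ : Set E → ℝ≥0∞) (I : Set (Set E)) : Set (Set E) :=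
  {B | MeasurableSet B ∧ ∃ A ∈ I, τ (B \ A) = 0}

theorem isSigmaIdeal_nullClosure (hτ : SigmaMaxitive τ) {I : Set (Set E)} (hI : IsSigmaIdeal I) :
    IsSigmaIdeal (nullClosure τ I) := by
  refine ⟨⟨∅, .empty, ∅, hI.empty_mem, by simp [hτ.1]⟩, fun _ hB => hB.1, fun B hB => ?_,
    fun A B hB hAB hA => ?_⟩
  · choose hBm A hA hBA using hB
    have hAm (n : ℕ) : MeasurableSet (A n) := hI.2.1 _ (hA n)
    have hsub : (⋃ n, B n) \ ⋃ n, A n ⊆ ⋃ n, B n \ A n := fun x ⟨hxB, hxA⟩ =>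
      let ⟨n, hn⟩ := mem_iUnion.1 hxB
      mem_iUnion.2 ⟨n, hn, fun h => hxA (mem_iUnion.2 ⟨n, h⟩)⟩
    refine ⟨.iUnion hBm, ⋃ n, A n, hI.iUnion_mem hA, nonpos_iff_eq_zero.1 ?_⟩
    calc τ ((⋃ n, B n) \ ⋃ n, A n) ≤ τ (⋃ n, B n \ A n) :=
          hτ.mono ((MeasurableSet.iUnion hBm).diff (.iUnion hAm))
            (.iUnion fun n => (hBm n).diff (hAm n)) hsub
      _ = 0 := by simp [hτ.iUnion fun n => (hBm n).diff (hAm n), hBA]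
  · obtain ⟨hBm, C, hC, hBC⟩ := hB
    have hCm := hI.2.1 C hC
    exact ⟨hA, C, hC, nonpos_iff_eq_zero.1 <|
      hBC ▸ hτ.mono (hA.diff hCm) (hBm.diff hCm) (sdiff_subset_sdiff_left hAB)⟩

theorem HasShilkretRNP.exists_density_of_isSigmaIdeal (h : HasShilkretRNP τ)
    (hτ : SigmaMaxitive τ) {I : Set (Set E)} (hI : IsSigmaIdeal I)
    (hnull : ∀ B, MeasurableSet B → τ B = 0 → B ∈ I) :
    ∃ c : E → ℝ≥0∞, Measurable c ∧ {x | c x = 0} ∈ I ∧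
      (∀ S ∈ I, τ (S ∩ {x | 0 < c x}) = 0) ∧ ∀ t ≠ 0, τ {x | t < c x} < ⊤ := by
  obtain ⟨c, hc, hrep⟩ :=
    h _ (sigmaMaxitive_indicator_compl hI) (shilkretAbsCont_indicator_compl hnull)
  have hmem (B : Set E) (hB : MeasurableSet B) : B ∈ I ↔ shilkretInt τ c B = 0 := by
    rw [← hrep B hB, indicator_compl_one_eq_zero_iff]
  refine ⟨c, hc, ?_, fun S hS => ?_, fun t ht => ?_⟩
  · have hZ : MeasurableSet {x | c x = 0} := hc (measurableSet_singleton 0)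
    rw [hmem _ hZ, shilkretInt_eq_zero_iff hτ hc hZ]
    convert hτ.1
    ext x
    simp +contextual
  · exact (shilkretInt_eq_zero_iff hτ hc (hI.2.1 S hS)).1 ((hmem S (hI.2.1 S hS)).1 hS)
  · have hlev : MeasurableSet {x | t < c x} := hc measurableSet_Ioi
    refine ENNReal.lt_top_of_mul_ne_top_right (ne_top_of_le_ne_top ENNReal.one_ne_top ?_) ht
    calc t * τ {x | t < c x} = t * τ ({x | t < c x} ∩ {x | t < c x}) := by rw [inter_self]
      _ ≤ shilkretInt τ c {x | t < c x} := mul_measure_inter_lt_le_shilkretInt hτ c _ t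
      _ = Iᶜ.indicator 1 {x | t < c x} := (hrep _ hlev).symm
      _ ≤ 1 := indicator_le_self _ _ _

theorem HasShilkretRNP.isSigmaFinite (h : HasShilkretRNP τ) (hτ : SigmaMaxitive τ) :
    IsSigmaFinite τ := by
  have hI := isSigmaIdeal_sigmaFiniteSets hτ
  obtain ⟨c, hc, hzero, -, hfin⟩ := h.exists_density_of_isSigmaIdeal hτ hI
    fun B hB h0 => mem_sigmaFiniteSets_of_lt_top hB (h0 ▸ ENNReal.zero_lt_top)
  have hpos : {x | 0 < c x} ∈ sigmaFiniteSets τ := by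
    rw [setOf_pos_eq_iUnion_inv_lt]
    exact hI.iUnion_mem fun n =>
      mem_sigmaFiniteSets_of_lt_top (hc measurableSet_Ioi) (hfin _ (by simp))
  obtain ⟨-, C, hCm, hCu, hCfin⟩ := hI.2.2.2 univ _ (hI.union_mem hzero hpos)
    (fun x _ => (eq_zero_or_pos (c x)).imp id id) MeasurableSet.univ
  exact ⟨C, hCm, univ_subset_iff.1 hCu, hCfin⟩

theorem HasShilkretRNP.sigmaPrincipal (h : HasShilkretRNP τ) (hτ : SigmaMaxitive τ) :
    SigmaPrincipal τ := by
  intro I hI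
  obtain ⟨c, hc, ⟨-, L, hL, hZL⟩, hpos, -⟩ :=
    h.exists_density_of_isSigmaIdeal hτ (isSigmaIdeal_nullClosure hτ hI)
      fun B hB h0 => ⟨hB, ∅, hI.empty_mem, by rwa [sdiff_empty]⟩
  have hLm := hI.2.1 L hL
  have hZ : MeasurableSet {x | c x = 0} := hc (measurableSet_singleton 0)
  refine ⟨L, hL, fun S hS => nonpos_iff_eq_zero.1 ?_⟩
  have hSm := hI.2.1 S hS
  have hSpos : MeasurableSet (S ∩ {x | 0 < c x}) := hSm.inter (hc measurableSet_Ioi)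
  calc τ (S \ L) ≤ τ ((S ∩ {x | 0 < c x}) ∪ ({x | c x = 0} \ L)) :=
        hτ.mono (hSm.diff hLm) (hSpos.union (hZ.diff hLm)) fun x ⟨hxS, hxL⟩ =>
          (eq_zero_or_pos (c x)).elim (fun h0 => Or.inr ⟨h0, hxL⟩) fun hp => Or.inl ⟨hxS, hp⟩
    _ = 0 := by
        rw [hτ.union hSpos (hZ.diff hLm), hZL, hpos S ⟨hSm, S, hS, by simp [hτ.1]⟩, max_self]

theorem ShilkretAbsCont.measure_eq_zero (hac : ShilkretAbsCont ν τ) (hτ : SigmaMaxitive τ)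
    (hν : SigmaMaxitive ν) (hfin : IsSigmaFinite τ) {B : Set E} (hB : MeasurableSet B)
    (h0 : τ B = 0) : ν B = 0 := by
  obtain ⟨C, hCm, hCu, -⟩ := hfin
  have hm (n : ℕ) : MeasurableSet (B ∩ C n) := hB.inter (hCm n)
  rw [← inter_univ B, ← hCu, inter_iUnion, hν.iUnion hm, ENNReal.iSup_eq_zero]
  intro n
  have hn0 : τ (B ∩ C n) = 0 := nonpos_iff_eq_zero.1 (h0 ▸ hτ.mono (hm n) hB inter_subset_left)
  simpa [hn0] using hac _ (hm n) (hn0 ▸ ENNReal.zero_lt_top)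

def dominatedSets (ν τ : Set E → ℝ≥0∞) (a : ℝ≥0∞) : Set (Set E) :=
  {A | MeasurableSet A ∧ ∀ A' ⊆ A, MeasurableSet A' → ν A' ≤ a * τ A'}

theorem isSigmaIdeal_dominatedSets (hτ : SigmaMaxitive τ) (hν : SigmaMaxitive ν) (a : ℝ≥0∞) :
    IsSigmaIdeal (dominatedSets ν τ a) := by
  refine ⟨⟨∅, .empty, fun A' hA' _ => by simp [subset_empty_iff.1 hA', hν.1]⟩, fun _ hA => hA.1,
    fun B hB => ⟨.iUnion fun n => (hB n).1, fun A' hA' hA'm => ?_⟩,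
    fun A B hB hAB hA => ⟨hA, fun A' hA' => hB.2 A' (hA'.trans hAB)⟩⟩
  have hm (n : ℕ) : MeasurableSet (A' ∩ B n) := hA'm.inter (hB n).1
  rw [← inter_eq_left.2 hA', inter_iUnion, hν.iUnion hm, hτ.iUnion hm, ENNReal.mul_iSup]
  exact iSup_mono fun n => (hB n).2 _ inter_subset_right (hm n)

theorem isSigmaIdeal_setOf_mul_measure_inter_le (hτ : SigmaMaxitive τ) {A : Set E}
    (hA : MeasurableSet A) (a b : ℝ≥0∞) :
    IsSigmaIdeal {S | MeasurableSet S ∧ a * τ (S ∩ A) ≤ b} := by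
  refine ⟨⟨∅, .empty, by simp [hτ.1]⟩, fun _ hS => hS.1,
    fun S hS => ⟨.iUnion fun n => (hS n).1, ?_⟩, fun S T hT hST hS => ⟨hS, ?_⟩⟩
  · rw [iUnion_inter, hτ.iUnion fun n => (hS n).1.inter hA, ENNReal.mul_iSup]
    exact iSup_le fun n => (hS n).2
  · exact (mul_le_mul_right (hτ.mono (hS.inter hA) (hT.1.inter hA)
      (inter_subset_inter_left _ hST)) a).trans hT.2

theorem mul_measure_le_of_disjoint (hτ : SigmaMaxitive τ) (hν : SigmaMaxitive ν)
    (hprin : SigmaPrincipal τ) (hnull : ∀ B, MeasurableSet B → τ B = 0 → ν B = 0)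
    {a : ℝ≥0∞} {L : Set E} (hL : ∀ S ∈ dominatedSets ν τ a, τ (S \ L) = 0) {A : Set E}
    (hA : MeasurableSet A) (hAL : Disjoint A L) : a * τ A ≤ ν A := by
  obtain ⟨W, ⟨hW, hWA⟩, hWmax⟩ :=
    hprin _ (isSigmaIdeal_setOf_mul_measure_inter_le hτ hA a (ν A))
  have hdom : A \ W ∈ dominatedSets ν τ a := by
    refine ⟨hA.diff hW, fun A' hA' hA'm => ?_⟩
    by_contra! hlt
    have hA'A : A' ⊆ A := hA'.trans sdiff_subset
    have hA'W : A' \ W = A' := (disjoint_sdiff_left.mono_left hA').sdiff_eq_left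
    have h0 : τ A' = 0 := by
      refine hA'W ▸ hWmax A' ⟨hA'm, ?_⟩
      rw [inter_eq_left.2 hA'A]
      exact hlt.le.trans (hν.mono hA'm hA hA'A)
    simp [h0, hnull A' hA'm h0] at hlt
  have hAW : τ (A \ W) = 0 := (hAL.mono_left sdiff_subset).sdiff_eq_left ▸ hL _ hdom
  have hAWA : τ A = τ (W ∩ A) := by
    conv_lhs => rw [← inter_union_sdiff A W]
    rw [hτ.union (hA.inter hW) (hA.diff hW), hAW, max_zero, inter_comm]
  exact hAWA ▸ hWA

noncomputable def levelDensity {α : Type*} (L : ℚ → Set α) (x : α) : ℝ≥0∞ :=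
  ⨅ (q : ℚ) (_ : x ∈ L q), ENNReal.ofReal q

theorem measurable_levelDensity {L : ℚ → Set E} (hL : ∀ q, MeasurableSet (L q)) :
    Measurable (levelDensity L) := by
  classical
  refine Measurable.iInf fun q => ?_
  simp only [iInf_eq_if]
  exact Measurable.ite (hL q) measurable_const measurable_const

theorem levelDensity_le {α : Type*} {L : ℚ → Set α} {q : ℚ} {x : α} (hx : x ∈ L q) :
    levelDensity L x ≤ ENNReal.ofReal q :=
  iInf₂_le q hx

theorem exists_mem_of_levelDensity_lt {α : Type*} {L : ℚ → Set α} {x : α} {b : ℝ≥0∞}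
    (h : levelDensity L x < b) : ∃ q, x ∈ L q ∧ ENNReal.ofReal q < b := by
  simpa only [levelDensity, iInf_lt_iff, exists_prop] using h

theorem measure_le_mul_of_forall_levelDensity_lt (hτ : SigmaMaxitive τ) (hν : SigmaMaxitive ν)
    {L : ℚ → Set E} (hL : ∀ q : ℚ, L q ∈ dominatedSets ν τ (ENNReal.ofReal q)) {A : Set E}
    (hA : MeasurableSet A) {b : ℝ≥0∞} (hb : ∀ x ∈ A, levelDensity L x < b) :
    ν A ≤ b * τ A := by
  have hcover : A = ⋃ q : {q : ℚ // ENNReal.ofReal q < b}, A ∩ L q := by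
    refine (iUnion_subset fun _ => inter_subset_left).antisymm' fun x hx => ?_
    obtain ⟨q, hxq, hqb⟩ := exists_mem_of_levelDensity_lt (hb x hx)
    exact mem_iUnion.2 ⟨⟨q, hqb⟩, hx, hxq⟩
  have hm (q : ℚ) : MeasurableSet (A ∩ L q) := hA.inter (hL q).1
  calc ν A = ⨆ q : {q : ℚ // ENNReal.ofReal q < b}, ν (A ∩ L q) := by
        rw [← hν.iUnion (B := fun q : {q : ℚ // ENNReal.ofReal q < b} => A ∩ L q) fun q => hm q,
          ← hcover]
    _ ≤ b * τ A := iSup_le fun q =>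
        ((hL q).2 _ inter_subset_right (hm q)).trans
          (mul_le_mul' q.2.le (hτ.mono (hm q) hA inter_subset_left))

theorem measure_inter_levelDensity_eq_zero (hτ : SigmaMaxitive τ) (hν : SigmaMaxitive ν)
    (hfin : IsSigmaFinite τ) {L : ℚ → Set E}
    (hL : ∀ q : ℚ, L q ∈ dominatedSets ν τ (ENNReal.ofReal q)) {B : Set E} (hB : MeasurableSet B) :
    ν (B ∩ {x | levelDensity L x = 0}) = 0 := by
  obtain ⟨C, hCm, hCu, hCfin⟩ := hfin
  have hZ : MeasurableSet (B ∩ {x | levelDensity L x = 0}) :=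
    hB.inter (measurable_levelDensity (fun q => (hL q).1) (measurableSet_singleton 0))
  rw [← inter_univ (B ∩ _), ← hCu, inter_iUnion, hν.iUnion fun n => hZ.inter (hCm n),
    ENNReal.iSup_eq_zero]
  refine fun n => ENNReal.eq_zero_of_forall_pos_le_mul (hCfin n).ne fun ε hε => ?_
  calc ν (B ∩ {x | levelDensity L x = 0} ∩ C n)
      ≤ ε * τ (B ∩ {x | levelDensity L x = 0} ∩ C n) :=
        measure_le_mul_of_forall_levelDensity_lt hτ hν hL (hZ.inter (hCm n))
          fun x hx => (show levelDensity L x = 0 from hx.1.2) ▸ hε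
    _ ≤ ε * τ (C n) := mul_le_mul_right (hτ.mono (hZ.inter (hCm n)) (hCm n) inter_subset_right) ε

theorem measure_inter_levelDensity_ne_zero_ne_top_le (hτ : SigmaMaxitive τ)
    (hν : SigmaMaxitive ν) {L : ℚ → Set E}
    (hL : ∀ q : ℚ, L q ∈ dominatedSets ν τ (ENNReal.ofReal q)) {B : Set E} (hB : MeasurableSet B) :
    ν (B ∩ {x | levelDensity L x ≠ 0 ∧ levelDensity L x ≠ ⊤}) ≤
      shilkretInt τ (levelDensity L) B := by
  set c := levelDensity L
  have hc : Measurable c := measurable_levelDensity fun q => (hL q).1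
  have hlev (t : ℝ≥0∞) : MeasurableSet (B ∩ {x | t < c x}) := hB.inter (hc measurableSet_Ioi)
  refine ENNReal.le_of_forall_lt_one_mul_le fun a ha => ?_
  rcases eq_or_ne a 0 with rfl | ha0
  · simp
  -- on `P q` we have `q < c < q / a`, so `a ν ≤ q τ` there and `q τ ≤ ∫⁻⊕ c dτ`
  set P : ℚ → Set E := fun q => B ∩ {x | ENNReal.ofReal q < c x ∧ a * c x < ENNReal.ofReal q}
  have hP (q : ℚ) : MeasurableSet (P q) :=
    hB.inter ((hc measurableSet_Ioi).inter (measurableSet_lt (hc.const_mul a) measurable_const))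
  have hcover : B ∩ {x | c x ≠ 0 ∧ c x ≠ ⊤} ⊆ ⋃ q, P q := by
    rintro x ⟨hx, h0, htop⟩
    have hac : a * c x < c x := by
      simpa [mul_comm] using ENNReal.mul_lt_mul_right h0 htop ha
    obtain ⟨q, h1, h2⟩ := ENNReal.exists_ofReal_rat_btwn hac
    exact mem_iUnion.2 ⟨q, hx, h2, h1⟩
  have hpiece (q : ℚ) : a * ν (P q) ≤ shilkretInt τ c B :=
    calc a * ν (P q) ≤ a * (ENNReal.ofReal q / a * τ (P q)) :=
          mul_le_mul_right (measure_le_mul_of_forall_levelDensity_lt hτ hν hL (hP q) fun x hx =>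
            (ENNReal.lt_div_iff_mul_lt (Or.inl ha0) (Or.inl (ha.trans ENNReal.one_lt_top).ne)).2
              (mul_comm a (c x) ▸ hx.2.2)) a
      _ ≤ ENNReal.ofReal q * τ (P q) := by
          rw [← mul_assoc]
          exact mul_le_mul_left ENNReal.mul_div_le _
      _ ≤ ENNReal.ofReal q * τ (B ∩ {x | ENNReal.ofReal q < c x}) :=
          mul_le_mul_right (hτ.mono (hP q) (hlev _) fun x hx => ⟨hx.1, hx.2.1⟩) _
      _ ≤ shilkretInt τ c B := mul_measure_inter_lt_le_shilkretInt hτ c B _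
  calc a * ν (B ∩ {x | c x ≠ 0 ∧ c x ≠ ⊤}) ≤ a * ⨆ q, ν (P q) := by
        rw [← hν.iUnion hP]
        exact mul_le_mul_right (hν.mono (hB.inter
          ((hc (measurableSet_singleton 0)).compl.inter (hc (measurableSet_singleton ⊤)).compl))
          (.iUnion hP) hcover) a
    _ ≤ shilkretInt τ c B := by
        rw [ENNReal.mul_iSup]
        exact iSup_le hpiece

theorem le_shilkretInt_levelDensity (hτ : SigmaMaxitive τ) (hν : SigmaMaxitive ν)
    (hfin : IsSigmaFinite τ) (hnull : ∀ B, MeasurableSet B → τ B = 0 → ν B = 0)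
    {L : ℚ → Set E} (hL : ∀ q : ℚ, L q ∈ dominatedSets ν τ (ENNReal.ofReal q)) {B : Set E}
    (hB : MeasurableSet B) : ν B ≤ shilkretInt τ (levelDensity L) B := by
  set c := levelDensity L
  have hc : Measurable c := measurable_levelDensity fun q => (hL q).1
  have hZ : MeasurableSet (B ∩ {x | c x = 0}) := hB.inter (hc (measurableSet_singleton 0))
  have hT : MeasurableSet (B ∩ {x | c x = ⊤}) := hB.inter (hc (measurableSet_singleton ⊤))
  have hM : MeasurableSet (B ∩ {x | c x ≠ 0 ∧ c x ≠ ⊤}) :=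
    hB.inter ((hc (measurableSet_singleton 0)).compl.inter (hc (measurableSet_singleton ⊤)).compl)
  have hsplit : B = (B ∩ {x | c x = 0}) ∪ ((B ∩ {x | c x = ⊤}) ∪ B ∩ {x | c x ≠ 0 ∧ c x ≠ ⊤}) := by
    ext x
    simp only [mem_union, mem_inter_iff, mem_ofPred_eq]
    tauto
  calc ν B = ν (B ∩ {x | c x = 0}) ⊔
        (ν (B ∩ {x | c x = ⊤}) ⊔ ν (B ∩ {x | c x ≠ 0 ∧ c x ≠ ⊤})) := by
        rw [← hν.union hT hM, ← hν.union hZ (hT.union hM), ← hsplit]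
    _ ≤ shilkretInt τ c B := by
        rw [measure_inter_levelDensity_eq_zero hτ hν hfin hL hB, zero_max]
        exact sup_le (measure_inter_eq_top_le_shilkretInt hτ hnull hc hB)
          (measure_inter_levelDensity_ne_zero_ne_top_le hτ hν hL hB)

theorem mul_measure_inter_lt_levelDensity_le (hτ : SigmaMaxitive τ) (hν : SigmaMaxitive ν)
    (hprin : SigmaPrincipal τ) (hnull : ∀ B, MeasurableSet B → τ B = 0 → ν B = 0)
    {L : ℚ → Set E} (hLm : ∀ q, MeasurableSet (L q))
    (hL : ∀ q : ℚ, ∀ S ∈ dominatedSets ν τ (ENNReal.ofReal q), τ (S \ L q) = 0)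
    {B : Set E} (hB : MeasurableSet B) (t : ℝ≥0∞) :
    t * τ (B ∩ {x | t < levelDensity L x}) ≤ ν B := by
  have hA : MeasurableSet (B ∩ {x | t < levelDensity L x}) :=
    hB.inter (measurable_levelDensity hLm measurableSet_Ioi)
  refine ENNReal.mul_le_of_forall_lt fun s hs u hu => ?_
  obtain ⟨q, hsq, hqt⟩ := ENNReal.exists_ofReal_rat_btwn hs
  have hdisj : Disjoint (B ∩ {x | t < levelDensity L x}) (L q) :=
    disjoint_left.2 fun x hxA hxL => (levelDensity_le hxL).not_gt (hqt.trans hxA.2)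
  calc s * u ≤ ENNReal.ofReal q * τ (B ∩ {x | t < levelDensity L x}) := mul_le_mul' hsq.le hu.le
    _ ≤ ν (B ∩ {x | t < levelDensity L x}) :=
        mul_measure_le_of_disjoint hτ hν hprin hnull (hL q) hA hdisj
    _ ≤ ν B := hν.mono hA hB inter_subset_left

theorem hasShilkretRNP_of_isSigmaFinite_of_sigmaPrincipal (hτ : SigmaMaxitive τ)
    (hfin : IsSigmaFinite τ) (hprin : SigmaPrincipal τ) : HasShilkretRNP τ := by
  intro ν hν hac
  have hnull (B : Set E) (hB : MeasurableSet B) (h0 : τ B = 0) : ν B = 0 :=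
    hac.measure_eq_zero hτ hν hfin hB h0
  choose L hLdom hLmax using
    fun q : ℚ => hprin _ (isSigmaIdeal_dominatedSets hτ hν (ENNReal.ofReal q))
  have hLm (q : ℚ) : MeasurableSet (L q) := (hLdom q).1
  refine ⟨levelDensity L, measurable_levelDensity hLm, fun B hB => le_antisymm
    (le_shilkretInt_levelDensity hτ hν hfin hnull hLdom hB) (iSup₂_le fun t _ => ?_)⟩
  exact mul_measure_inter_lt_levelDensity_le hτ hν hprin hnull hLm hLmax hB t

end Shilkret

/-- A σ-maxitive measure has the Radon–Nikodym property w.r.t. the Shilkret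
integral iff it is σ-finite and σ-principal. -/
theorem shilkret_rnp_iff_sigmaFinite_and_sigmaPrincipal
    {E : Type*} [MeasurableSpace E] (τ : Set E → ℝ≥0∞) (hτ : SigmaMaxitive τ) :
    (∀ ν : Set E → ℝ≥0∞, SigmaMaxitive ν →
        (∀ B : Set E, MeasurableSet B → τ B < ⊤ → ν B ≤ ⊤ * τ B) →
        ∃ c : E → ℝ≥0∞, Measurable c ∧
          ∀ B : Set E, MeasurableSet B → ν B = shilkretInt τ c B) ↔
      ((∃ B : ℕ → Set E, (∀ n, MeasurableSet (B n)) ∧ (⋃ n, B n) = univ ∧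
          ∀ n, τ (B n) < ⊤) ∧ SigmaPrincipal τ) := by
  change HasShilkretRNP τ ↔ IsSigmaFinite τ ∧ SigmaPrincipal τ
  exact ⟨fun h => ⟨h.isSigmaFinite hτ, h.sigmaPrincipal hτ⟩,
    fun h => hasShilkretRNP_of_isSigmaFinite_of_sigmaPrincipal hτ h.1 h.2⟩
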